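/- Let D be a triangulated category and let t1 = (𝒰1,𝒱1), t2 = (𝒰2,𝒱2) be torsion pairs in D with t1 ≼ t2, and set ℋ = 𝒰2 ∩ 𝒱1. Then the assignments φ(D^{≤0}, D^{≥0}) = (D^{≤0} ∩ 𝒱1, D^{≥1} ∩ 𝒰2) and ψ(𝒯,ℱ) = (𝒰1 * 𝒯, ℱ[1] * 𝒱2[1]) are mutually inverse, order preserving bijections between the set of t-structures (D^{≤0}, D^{≥0}) on D with 𝒰1 ⊆ D^{≤0} ⊆ 𝒰2 and the set of s-torsion pairs (𝒯,ℱ) in ℋ satisfying 𝒯[1] ⊆ 𝒰2 and ℱ[-1] ⊆ 𝒱1. -/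

import Mathlib

open CategoryTheory Category Limits Pretriangulated

universe v u

variable (D : Type u) [Category.{v} D] [Preadditive D] [HasZeroObject D]
  [HasShift D ℤ] [∀ n : ℤ, (shiftFunctor D n).Additive]
  [Pretriangulated D] [HasBinaryBiproducts D]

/-- `shiftSet D S n` is the full subcategory `S[n]`: objects isomorphic to `X⟦n⟧`
with `X ∈ S`. -/
def shiftSet (S : Set D) (n : ℤ) : Set D :=
  {A | ∃ B ∈ S, Nonempty (A ≅ B⟦n⟧)}

/-- `starSet D X Y` is `X * Y`: the class of objects `A` admitting a distinguished
triangle `X → A → Y → X[1]` with `X ∈ 𝒳` and `Y ∈ 𝒴`. -/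
def starSet (X Y : Set D) : Set D :=
  {A | ∃ (B C : D) (f : B ⟶ A) (g : A ⟶ C) (h : C ⟶ B⟦(1 : ℤ)⟧),
    B ∈ X ∧ C ∈ Y ∧ Triangle.mk f g h ∈ distTriang D}

/-- `Hom(X, Y) = 0`: every morphism from an object of `X` to an object of `Y` is zero. -/
def homZero (X Y : Set D) : Prop :=
  ∀ A ∈ X, ∀ B ∈ Y, ∀ f : A ⟶ B, f = 0

/-- a class of objects closed under isomorphisms -/
def isoClosed (S : Set D) : Prop :=
  ∀ ⦃A B : D⦄, (A ≅ B) → A ∈ S → B ∈ S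

/-- an additive full subcategory (closed under isomorphisms) which is closed under
direct summands -/
structure AdditiveClosed (S : Set D) : Prop where
  iso : isoClosed D S
  zero : ∀ Z : D, IsZero Z → Z ∈ S
  sum : ∀ A ∈ S, ∀ B ∈ S, (A ⊞ B) ∈ S
  summand : ∀ A ∈ S, ∀ (X : D) (i : X ⟶ A) (p : A ⟶ X), i ≫ p = 𝟙 X → X ∈ S

/-- a torsion pair `(U, V)` in the triangulated category `D` -/
structure IsTorsionPair (U V : Set D) : Prop where
  addU : AdditiveClosed D U
  addV : AdditiveClosed D V
  hom_zero : homZero D U V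
  cover : ∀ A : D, A ∈ starSet D U V

/-- `t₁ ≼ t₂` for torsion pairs in a triangulated category: `U₁ ⊆ U₂` and `U₁[1] ⊆ U₂`. -/
def torsLE (U₁ U₂ : Set D) : Prop :=
  U₁ ⊆ U₂ ∧ shiftSet D U₁ 1 ⊆ U₂

/-- a torsion pair `(T, F)` in an (extension-closed) full subcategory `H` of `D`:
`T` and `F` are additive subcategories of `H` closed under direct summands,
`Hom(T, F) = 0`, and every object of `H` admits a distinguished triangle
`T → X → F → T[1]` with `T ∈ 𝒯`, `F ∈ ℱ`. -/
structure IsTorsionPairIn (H T F : Set D) : Prop where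
  subT : T ⊆ H
  subF : F ⊆ H
  isoT : ∀ ⦃A B : D⦄, (A ≅ B) → A ∈ T → B ∈ H → B ∈ T
  isoF : ∀ ⦃A B : D⦄, (A ≅ B) → A ∈ F → B ∈ H → B ∈ F
  zeroT : ∀ Z : D, IsZero Z → Z ∈ H → Z ∈ T
  zeroF : ∀ Z : D, IsZero Z → Z ∈ H → Z ∈ F
  sumT : ∀ A ∈ T, ∀ B ∈ T, (A ⊞ B) ∈ T
  sumF : ∀ A ∈ F, ∀ B ∈ F, (A ⊞ B) ∈ F
  summandT : ∀ A ∈ T, ∀ (X : D) (i : X ⟶ A) (p : A ⟶ X), i ≫ p = 𝟙 X → X ∈ H → X ∈ T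
  summandF : ∀ A ∈ F, ∀ (X : D) (i : X ⟶ A) (p : A ⟶ X), i ≫ p = 𝟙 X → X ∈ H → X ∈ F
  hom_zero : homZero D T F
  cover : ∀ A ∈ H, A ∈ starSet D T F

/-- an `s`-torsion pair in `H`: a torsion pair with moreover `Hom(T, F[-1]) = 0`. -/
structure IsSTorsionPairIn (H T F : Set D) extends IsTorsionPairIn D H T F : Prop where
  neg_hom_zero : ∀ A ∈ T, ∀ B ∈ F, ∀ f : A ⟶ B⟦(-1 : ℤ)⟧, f = 0

/-- the relation `≼` for torsion pairs in a subcategory `H`: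
`Hom(T, F') = 0` and `Hom(T, F'[-1]) = 0`. -/
def torsLEIn (T F' : Set D) : Prop :=
  homZero D T F' ∧ homZero D T (shiftSet D F' (-1))

/-- a `t`-structure `(L, G) = (S^{≤0}, S^{≥0})` on a triangulated (full) subcategory `S`
of `D` (take `S = Set.univ` for a `t`-structure on `D` itself). -/
structure IsTStructureOn (S L G : Set D) : Prop where
  subL : L ⊆ S
  subG : G ⊆ S
  isoL : ∀ ⦃A B : D⦄, (A ≅ B) → A ∈ L → B ∈ S → B ∈ L
  isoG : ∀ ⦃A B : D⦄, (A ≅ B) → A ∈ G → B ∈ S → B ∈ G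
  hom_zero : homZero D L (shiftSet D G (-1))
  cover : ∀ A ∈ S, A ∈ starSet D L (shiftSet D G (-1))
  shiftL : L ⊆ shiftSet D L (-1)
  shiftG : shiftSet D G (-1) ⊆ G

/-- a `t`-structure `(L, G) = (D^{≤0}, D^{≥0})` on `D`. -/
def IsTStructure (L G : Set D) : Prop := IsTStructureOn D Set.univ L G

/-- a triangulated full subcategory of `D`. -/
structure IsTriangulatedSub (S : Set D) : Prop where
  iso : isoClosed D S
  zero : ∀ Z : D, IsZero Z → Z ∈ S
  shift : ∀ (n : ℤ), ∀ A ∈ S, A⟦n⟧ ∈ S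
  ext₂ : ∀ (T : Triangle D), (T ∈ distTriang D) → T.obj₁ ∈ S → T.obj₃ ∈ S → T.obj₂ ∈ S

/-- an `m`-extended heart on `D`: a full subcategory of the form
`V^{≥ -(m-1)} ∩ V^{≤ 0}` for some `t`-structure `(V^{≤0}, V^{≥0})` on `D`. -/
def IsExtendedHeart (m : ℤ) (E : Set D) : Prop :=
  ∃ L G : Set D, IsTStructure D L G ∧ E = shiftSet D G (m - 1) ∩ L

/-- the relation `E₁ ≤ E₂` for `m`-extended hearts:
`E₁ ⊆ E₂[m] * E₂` and `E₂ ⊆ E₁ * E₁[-m]`. -/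
def extHeartLE (m : ℤ) (E₁ E₂ : Set D) : Prop :=
  E₁ ⊆ starSet D (shiftSet D E₂ m) E₂ ∧ E₂ ⊆ starSet D E₁ (shiftSet D E₁ (-m))

/-!
Every class in sight is an orthogonal of another one (`D^{≤0} = ⊥D^{≥1}`, `𝒰 = ⊥𝒱`,
`𝒯 = ℋ ∩ ⊥ℱ`, ...), so each inclusion is checked by the vanishing of Hom, which propagates along
extensions and shifts. The one real construction is the decomposition of an arbitrary object with
respect to `(𝒰₁ * 𝒯, ℱ * 𝒱₂)`, which makes `ψ(𝒯, ℱ)` a t-structure; as `D` is only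
pretriangulated, it is obtained by a diagram chase instead of the octahedral axiom.
-/

section Shift

variable {C : Type*} [Category C] [HasShift C ℤ]

lemma mem_shiftSet_shift {S : Set C} {A : C} (hA : A ∈ S) (n : ℤ) : A⟦n⟧ ∈ shiftSet C S n :=
  ⟨A, hA, ⟨Iso.refl _⟩⟩

lemma shiftSet_isoClosed (S : Set C) (n : ℤ) : isoClosed C (shiftSet C S n) :=
  fun _ _ e ⟨B, hB, ⟨e'⟩⟩ => ⟨B, hB, ⟨e.symm ≪≫ e'⟩⟩

lemma shiftSet_shiftSet (S : Set C) (m n : ℤ) :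
    shiftSet C (shiftSet C S m) n = shiftSet C S (m + n) := by
  ext A
  constructor
  · rintro ⟨B, ⟨B', hB', ⟨e'⟩⟩, ⟨e⟩⟩
    exact ⟨B', hB', ⟨e ≪≫ (shiftFunctor C n).mapIso e' ≪≫ ((shiftFunctorAdd C m n).app B').symm⟩⟩
  · rintro ⟨B', hB', ⟨e⟩⟩
    exact ⟨_, mem_shiftSet_shift hB' m, ⟨e ≪≫ (shiftFunctorAdd C m n).app B'⟩⟩

lemma shiftSet_zero {S : Set C} (hS : isoClosed C S) : shiftSet C S 0 = S := by
  ext A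
  constructor
  · rintro ⟨B, hB, ⟨e⟩⟩
    exact hS (e ≪≫ (shiftFunctorZero C ℤ).app B).symm hB
  · intro hA
    exact ⟨A, hA, ⟨((shiftFunctorZero C ℤ).app A).symm⟩⟩

end Shift

section HomVanishing

variable {C : Type*} [Category C] [Preadditive C]

lemma hom_from_retract_eq_zero {X A P : C} {i : X ⟶ A} {p : A ⟶ X} (hip : i ≫ p = 𝟙 X)
    (h : ∀ f : A ⟶ P, f = 0) (f : X ⟶ P) : f = 0 := by
  rw [← id_comp f, ← hip, assoc, h (p ≫ f), comp_zero]

lemma hom_to_retract_eq_zero {X A P : C} {i : X ⟶ A} {p : A ⟶ X} (hip : i ≫ p = 𝟙 X)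
    (h : ∀ f : P ⟶ A, f = 0) (f : P ⟶ X) : f = 0 := by
  rw [← comp_id f, ← hip, ← assoc, h (f ≫ i), zero_comp]

lemma hom_from_biprod_eq_zero [HasBinaryBiproducts C] {A B P : C} (hA : ∀ f : A ⟶ P, f = 0)
    (hB : ∀ f : B ⟶ P, f = 0) (f : A ⊞ B ⟶ P) : f = 0 :=
  biprod.hom_ext' _ _ ((hA _).trans (comp_zero).symm) ((hB _).trans (comp_zero).symm)

lemma hom_to_biprod_eq_zero [HasBinaryBiproducts C] {A B P : C} (hA : ∀ f : P ⟶ A, f = 0)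
    (hB : ∀ f : P ⟶ B, f = 0) (f : P ⟶ A ⊞ B) : f = 0 :=
  biprod.hom_ext _ _ ((hA _).trans (zero_comp).symm) ((hB _).trans (zero_comp).symm)

variable [HasShift C ℤ]

lemma hom_to_shift_neg_eq_zero {A B : C} (h : ∀ g : A⟦(1 : ℤ)⟧ ⟶ B, g = 0)
    (f : A ⟶ B⟦(-1 : ℤ)⟧) : f = 0 :=
  ((shiftEquiv C (1 : ℤ)).toAdjunction.homEquiv A B).symm.injective ((h _).trans (h _).symm)

lemma hom_from_shift_eq_zero {A B : C} (h : ∀ f : A ⟶ B⟦(-1 : ℤ)⟧, f = 0)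
    (g : A⟦(1 : ℤ)⟧ ⟶ B) : g = 0 :=
  ((shiftEquiv C (1 : ℤ)).toAdjunction.homEquiv A B).injective ((h _).trans (h _).symm)

end HomVanishing

section Triangles

variable {C : Type*} [Category C] [Preadditive C] [HasZeroObject C] [HasShift C ℤ]
  [∀ n : ℤ, (shiftFunctor C n).Additive] [Pretriangulated C]
  {T : Triangle C} (hT : T ∈ distTriang C)
include hT

lemma isSplitEpi_mor₁_of_mor₂_eq_zero (h : T.mor₂ = 0) : IsSplitEpi T.mor₁ :=
  let ⟨s, hs⟩ := Triangle.coyoneda_exact₂ _ hT (𝟙 _) (by rw [id_comp, h])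
  IsSplitEpi.mk' ⟨s, hs.symm⟩

lemma isSplitMono_mor₂_of_mor₁_eq_zero (h : T.mor₁ = 0) : IsSplitMono T.mor₂ :=
  let ⟨r, hr⟩ := Triangle.yoneda_exact₂ _ hT (𝟙 _) (by rw [comp_id, h])
  IsSplitMono.mk' ⟨r, hr.symm⟩

lemma hom_to_obj₁_eq_zero {P : C} (φ : P ⟶ T.obj₁) (hφ : φ ≫ T.mor₁ = 0)
    (h : ∀ ψ : P⟦(1 : ℤ)⟧ ⟶ T.obj₃, ψ = 0) : φ = 0 := by
  obtain ⟨ψ, hψ⟩ := Triangle.coyoneda_exact₁ _ hT (φ⟦(1 : ℤ)⟧')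
    (by rw [← Functor.map_comp, hφ, Functor.map_zero])
  rwa [h ψ, zero_comp, Functor.map_eq_zero_iff] at hψ

lemma hom_from_obj₃_eq_zero {P : C} (φ : T.obj₃ ⟶ P) (hφ : T.mor₂ ≫ φ = 0)
    (h : ∀ ψ : T.obj₁⟦(1 : ℤ)⟧ ⟶ P, ψ = 0) : φ = 0 := by
  obtain ⟨ψ, rfl⟩ := Triangle.yoneda_exact₃ _ hT φ hφ
  rw [h ψ, comp_zero]

lemma coyoneda_exact₂_shift {P : C} (ρ : P ⟶ T.obj₂⟦(1 : ℤ)⟧) (hρ : ρ ≫ T.mor₂⟦(1 : ℤ)⟧' = 0) :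
    ∃ ζ : P ⟶ T.obj₁⟦(1 : ℤ)⟧, ρ = ζ ≫ T.mor₁⟦(1 : ℤ)⟧' := by
  obtain ⟨ζ, hζ⟩ := Triangle.coyoneda_exact₁ _ (rot_of_distTriang _ hT) ρ hρ
  exact ⟨-ζ, hζ.trans ((Preadditive.comp_neg _ _).trans (Preadditive.neg_comp _ _).symm)⟩

lemma comp_mor₁_surjective {P : C} (h : ∀ φ : P ⟶ T.obj₃, φ = 0) :
    Function.Surjective fun ψ : P ⟶ T.obj₁ => ψ ≫ T.mor₁ := fun φ =>
  let ⟨ψ, hψ⟩ := Triangle.coyoneda_exact₂ _ hT φ (h _)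
  ⟨ψ, hψ.symm⟩

lemma eq_zero_of_comp_shift_mor₁_eq_zero {P : C} (h : ∀ φ : P ⟶ T.obj₃, φ = 0)
    (ρ : P ⟶ T.obj₁⟦(1 : ℤ)⟧) (hρ : ρ ≫ T.mor₁⟦(1 : ℤ)⟧' = 0) : ρ = 0 := by
  obtain ⟨ψ, rfl⟩ := Triangle.coyoneda_exact₁ _ hT ρ hρ
  rw [h ψ, zero_comp]

lemma hom_to_obj₃_eq_zero {P : C} (hs : Function.Surjective fun ψ : P ⟶ T.obj₁ => ψ ≫ T.mor₁)
    (hi : ∀ ρ : P ⟶ T.obj₁⟦(1 : ℤ)⟧, ρ ≫ T.mor₁⟦(1 : ℤ)⟧' = 0 → ρ = 0) (φ : P ⟶ T.obj₃) :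
    φ = 0 := by
  obtain ⟨ψ, rfl⟩ := Triangle.coyoneda_exact₃ _ hT φ
    (hi _ (by rw [assoc, comp_distTriang_mor_zero₃₁ _ hT, comp_zero]))
  obtain ⟨ψ', rfl⟩ := hs ψ
  rw [assoc, comp_distTriang_mor_zero₁₂ _ hT, comp_zero]

end Triangles

section TriangleMorphisms

variable {C : Type*} [Category C] [Preadditive C] [HasZeroObject C] [HasShift C ℤ]
  [∀ n : ℤ, (shiftFunctor C n).Additive] [Pretriangulated C]
  {T₁ T₂ : Triangle C} (hT₁ : T₁ ∈ distTriang C) (hT₂ : T₂ ∈ distTriang C) (φ : T₁ ⟶ T₂)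
  [IsIso φ.hom₁] {P : C}
include hT₁ hT₂

lemma comp_hom₂_surjective (hs : Function.Surjective fun θ : P ⟶ T₁.obj₃ => θ ≫ φ.hom₃) :
    Function.Surjective fun ψ : P ⟶ T₁.obj₂ => ψ ≫ φ.hom₂ := by
  intro ψ
  obtain ⟨θ, hθ : θ ≫ φ.hom₃ = ψ ≫ T₂.mor₂⟩ := hs (ψ ≫ T₂.mor₂)
  obtain ⟨χ, rfl⟩ := Triangle.coyoneda_exact₃ _ hT₁ θ (by
    rw [← cancel_mono (φ.hom₁⟦(1 : ℤ)⟧'), zero_comp, assoc, φ.comm₃, ← assoc, hθ, assoc,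
      comp_distTriang_mor_zero₂₃ _ hT₂, comp_zero])
  obtain ⟨ξ, hξ⟩ := Triangle.coyoneda_exact₂ _ hT₂ (ψ - χ ≫ φ.hom₂) (by
    rw [Preadditive.sub_comp, assoc, ← φ.comm₂, ← assoc, hθ, sub_self])
  refine ⟨χ + ξ ≫ inv φ.hom₁ ≫ T₁.mor₁, ?_⟩
  simp only [Preadditive.add_comp, assoc, φ.comm₁, IsIso.inv_hom_id_assoc, ← hξ]
  abel

lemma eq_zero_of_comp_shift_hom₂_eq_zero
    (hs : Function.Surjective fun θ : P ⟶ T₁.obj₃ => θ ≫ φ.hom₃)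
    (hi : ∀ ρ : P ⟶ T₁.obj₃⟦(1 : ℤ)⟧, ρ ≫ φ.hom₃⟦(1 : ℤ)⟧' = 0 → ρ = 0)
    (ρ : P ⟶ T₁.obj₂⟦(1 : ℤ)⟧) (hρ : ρ ≫ φ.hom₂⟦(1 : ℤ)⟧' = 0) : ρ = 0 := by
  obtain ⟨ζ, rfl⟩ := coyoneda_exact₂_shift hT₁ ρ (hi _ (by
    rw [assoc, ← Functor.map_comp, φ.comm₂, Functor.map_comp, ← assoc, hρ, zero_comp]))
  obtain ⟨ω, hω⟩ := Triangle.coyoneda_exact₁ _ hT₂ (ζ ≫ φ.hom₁⟦(1 : ℤ)⟧') (by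
    rw [assoc, ← Functor.map_comp, ← φ.comm₁, Functor.map_comp, ← assoc, hρ])
  obtain ⟨θ, rfl⟩ := hs ω
  have hζ : ζ = θ ≫ T₁.mor₃ := by
    rw [← cancel_mono (φ.hom₁⟦(1 : ℤ)⟧'), hω, assoc, assoc, φ.comm₃]
  rw [hζ, assoc, comp_distTriang_mor_zero₃₁ _ hT₁, comp_zero]

end TriangleMorphisms

section Extensions

variable {C : Type*} [Category C] [Preadditive C] [HasZeroObject C] [HasShift C ℤ]
  [∀ n : ℤ, (shiftFunctor C n).Additive] [Pretriangulated C] {X Y : Set C}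

lemma mem_starSet_of_distTriang {T : Triangle C} (hT : T ∈ distTriang C) (h₁ : T.obj₁ ∈ X)
    (h₃ : T.obj₃ ∈ Y) : T.obj₂ ∈ starSet C X Y :=
  ⟨T.obj₁, T.obj₃, T.mor₁, T.mor₂, T.mor₃, h₁, h₃, hT⟩

lemma mem_starSet_of_iso {T : Triangle C} (hT : T ∈ distTriang C) {B A E : C} (e₁ : T.obj₁ ≅ B)
    (e₂ : T.obj₂ ≅ A) (e₃ : T.obj₃ ≅ E) (hB : B ∈ X) (hE : E ∈ Y) : A ∈ starSet C X Y := by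
  let T' := Triangle.mk (e₁.inv ≫ T.mor₁ ≫ e₂.hom) (e₂.inv ≫ T.mor₂ ≫ e₃.hom)
    (e₃.inv ≫ T.mor₃ ≫ e₁.hom⟦(1 : ℤ)⟧')
  have hT' : T' ∈ distTriang C := isomorphic_distinguished _ hT _
    (Triangle.isoMk _ _ e₁.symm e₂.symm e₃.symm
      (by change (e₁.inv ≫ T.mor₁ ≫ e₂.hom) ≫ e₂.inv = e₁.inv ≫ T.mor₁; simp)
      (by change (e₂.inv ≫ T.mor₂ ≫ e₃.hom) ≫ e₃.inv = e₂.inv ≫ T.mor₂; simp)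
      (by change (e₃.inv ≫ T.mor₃ ≫ e₁.hom⟦(1 : ℤ)⟧') ≫ e₁.inv⟦(1 : ℤ)⟧' = e₃.inv ≫ T.mor₃
          simp [← Functor.map_comp]))
  exact mem_starSet_of_distTriang hT' hB hE

lemma starSet_isoClosed (X Y : Set C) : isoClosed C (starSet C X Y) :=
  fun _ _ e ⟨_, _, _, _, _, hB, hE, hT⟩ => mem_starSet_of_iso hT (Iso.refl _) e (Iso.refl _) hB hE

lemma starSet_mono {X' Y' : Set C} (hX : X ⊆ X') (hY : Y ⊆ Y') :
    starSet C X Y ⊆ starSet C X' Y' :=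
  fun _ ⟨B, E, f₁, f₂, f₃, hB, hE, hT⟩ => ⟨B, E, f₁, f₂, f₃, hX hB, hY hE, hT⟩

lemma mem_starSet_left (hY : ∀ Z : C, IsZero Z → Z ∈ Y) {A : C} (hA : A ∈ X) :
    A ∈ starSet C X Y :=
  mem_starSet_of_distTriang (contractible_distinguished A) hA (hY _ (isZero_zero C))

lemma mem_starSet_right (hX : ∀ Z : C, IsZero Z → Z ∈ X) {A : C} (hA : A ∈ Y) :
    A ∈ starSet C X Y :=
  mem_starSet_of_distTriang (contractible_distinguished₁ A) (hX _ (isZero_zero C)) hA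

lemma hom_from_mem_starSet_eq_zero {P : C} (hX : ∀ B ∈ X, ∀ f : B ⟶ P, f = 0)
    (hY : ∀ E ∈ Y, ∀ f : E ⟶ P, f = 0) : ∀ A ∈ starSet C X Y, ∀ f : A ⟶ P, f = 0 := by
  rintro A ⟨B, E, f₁, f₂, f₃, hB, hE, hT⟩ f
  obtain ⟨g, hg⟩ := Triangle.yoneda_exact₂ _ hT f (hX B hB _)
  rw [hg, hY E hE g]
  exact comp_zero

lemma hom_to_mem_starSet_eq_zero {P : C} (hX : ∀ B ∈ X, ∀ f : P ⟶ B, f = 0)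
    (hY : ∀ E ∈ Y, ∀ f : P ⟶ E, f = 0) : ∀ A ∈ starSet C X Y, ∀ f : P ⟶ A, f = 0 := by
  rintro A ⟨B, E, f₁, f₂, f₃, hB, hE, hT⟩ f
  obtain ⟨g, hg⟩ := Triangle.coyoneda_exact₂ _ hT f (hY E hE _)
  rw [hg, hX B hB g]
  exact zero_comp

lemma shiftSet_starSet (X Y : Set C) :
    shiftSet C (starSet C X Y) 1 = starSet C (shiftSet C X 1) (shiftSet C Y 1) := by
  ext A
  constructor
  · rintro ⟨B, ⟨_, _, _, _, _, hX, hY, hT⟩, ⟨e⟩⟩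
    exact mem_starSet_of_iso (Triangle.shift_distinguished _ hT 1) (Iso.refl _) e.symm
      (Iso.refl _) (mem_shiftSet_shift hX 1) (mem_shiftSet_shift hY 1)
  · rintro ⟨_, _, _, _, _, ⟨B, hB, ⟨eB⟩⟩, ⟨E, hE, ⟨eE⟩⟩, hT⟩
    refine ⟨A⟦(-1 : ℤ)⟧, ?_, ⟨(shiftNegShift A (1 : ℤ)).symm⟩⟩
    exact mem_starSet_of_iso (Triangle.shift_distinguished _ hT (-1))
      ((shiftFunctor C (-1 : ℤ)).mapIso eB ≪≫ shiftShiftNeg B (1 : ℤ)) (Iso.refl _)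
      ((shiftFunctor C (-1 : ℤ)).mapIso eE ≪≫ shiftShiftNeg E (1 : ℤ)) hB hE

lemma shiftSet_neg_starSet_shiftSet (X Y : Set C) :
    shiftSet C (starSet C (shiftSet C X 1) (shiftSet C Y 1)) (-1) = starSet C X Y := by
  rw [← shiftSet_starSet, shiftSet_shiftSet, add_neg_cancel, shiftSet_zero (starSet_isoClosed _ _)]

end Extensions

namespace IsTStructure

variable {C : Type*} [Category C] [Preadditive C] [HasZeroObject C] [HasShift C ℤ]
  [∀ n : ℤ, (shiftFunctor C n).Additive] [Pretriangulated C] {L G : Set C}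
  (hT : IsTStructure C L G)
include hT

lemma shift_mem {A : C} (hA : A ∈ L) : A⟦(1 : ℤ)⟧ ∈ L := by
  obtain ⟨B, hB, ⟨e⟩⟩ := hT.shiftL hA
  exact hT.isoL ((shiftFunctor C (1 : ℤ)).mapIso e ≪≫ shiftNegShift B (1 : ℤ)).symm hB trivial

lemma shift_neg_mem {A : C} (hA : A ∈ shiftSet C G (-1)) : A⟦(-1 : ℤ)⟧ ∈ shiftSet C G (-1) :=
  mem_shiftSet_shift (hT.shiftG hA) (-1)

lemma mem_of_hom_eq_zero {A : C} (h : ∀ B ∈ shiftSet C G (-1), ∀ f : A ⟶ B, f = 0) : A ∈ L := by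
  obtain ⟨B, E, f₁, f₂, f₃, hB, hE, hd⟩ := hT.cover A trivial
  have hE0 : IsZero E := (IsZero.iff_id_eq_zero E).2 (hom_from_obj₃_eq_zero hd (𝟙 E)
    ((comp_id f₂).trans (h E hE f₂)) (hT.hom_zero _ (hT.shift_mem hB) E hE))
  have : IsIso f₁ := (Triangle.isZero₃_iff_isIso₁ _ hd).1 hE0
  exact hT.isoL (asIso f₁) hB trivial

lemma mem_shiftSet_of_hom_eq_zero {A : C} (h : ∀ B ∈ L, ∀ f : B ⟶ A, f = 0) :
    A ∈ shiftSet C G (-1) := by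
  obtain ⟨B, E, f₁, f₂, f₃, hB, hE, hd⟩ := hT.cover A trivial
  have hB0 : IsZero B := (IsZero.iff_id_eq_zero B).2 (hom_to_obj₁_eq_zero hd (𝟙 B)
    ((id_comp f₁).trans (h B hB f₁)) (hT.hom_zero _ (hT.shift_mem hB) E hE))
  have : IsIso f₂ := (Triangle.isZero₁_iff_isIso₂ _ hd).1 hB0
  exact shiftSet_isoClosed G (-1) (asIso f₂).symm hE

end IsTStructure

section TorsionPairs

variable {C : Type*} [Category C] [Preadditive C] [HasZeroObject C] [HasShift C ℤ]
  [∀ n : ℤ, (shiftFunctor C n).Additive] [Pretriangulated C] [HasBinaryBiproducts C]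

namespace IsTorsionPair

variable {U V : Set C} (t : IsTorsionPair C U V)
include t

lemma mem_fst_of_hom_eq_zero {A : C} (h : ∀ B ∈ V, ∀ f : A ⟶ B, f = 0) : A ∈ U := by
  obtain ⟨B, E, f₁, f₂, f₃, hB, hE, hd⟩ := t.cover A
  have : IsSplitEpi f₁ := isSplitEpi_mor₁_of_mor₂_eq_zero hd (h E hE f₂)
  exact t.addU.summand B hB A (section_ f₁) f₁ (IsSplitEpi.id f₁)

lemma mem_snd_of_hom_eq_zero {A : C} (h : ∀ B ∈ U, ∀ f : B ⟶ A, f = 0) : A ∈ V := by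
  obtain ⟨B, E, f₁, f₂, f₃, hB, hE, hd⟩ := t.cover A
  have : IsSplitMono f₂ := isSplitMono_mor₂_of_mor₁_eq_zero hd (h B hB f₁)
  exact t.addV.summand E hE A f₂ (retraction f₂) (IsSplitMono.id f₂)

lemma starSet_subset_fst {X Y : Set C} (hX : X ⊆ U) (hY : Y ⊆ U) : starSet C X Y ⊆ U :=
  fun A hA => t.mem_fst_of_hom_eq_zero fun B hB =>
    hom_from_mem_starSet_eq_zero (fun _ h => t.hom_zero _ (hX h) B hB)
      (fun _ h => t.hom_zero _ (hY h) B hB) A hA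

end IsTorsionPair

namespace IsTorsionPairIn

variable {H T F : Set C} (t : IsTorsionPairIn C H T F)
include t

lemma mem_fst_of_hom_eq_zero {A : C} (hA : A ∈ H) (h : ∀ B ∈ F, ∀ f : A ⟶ B, f = 0) :
    A ∈ T := by
  obtain ⟨B, E, f₁, f₂, f₃, hB, hE, hd⟩ := t.cover A hA
  have : IsSplitEpi f₁ := isSplitEpi_mor₁_of_mor₂_eq_zero hd (h E hE f₂)
  exact t.summandT B hB A (section_ f₁) f₁ (IsSplitEpi.id f₁) hA

lemma mem_snd_of_hom_eq_zero {A : C} (hA : A ∈ H) (h : ∀ B ∈ T, ∀ f : B ⟶ A, f = 0) :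
    A ∈ F := by
  obtain ⟨B, E, f₁, f₂, f₃, hB, hE, hd⟩ := t.cover A hA
  have : IsSplitMono f₂ := isSplitMono_mor₂_of_mor₁_eq_zero hd (h B hB f₁)
  exact t.summandF E hE A f₂ (retraction f₂) (IsSplitMono.id f₂) hA

end IsTorsionPairIn

lemma zero_mem_inter {U₁ V₁ U₂ V₂ : Set C} (t₁ : IsTorsionPair C U₁ V₁)
    (t₂ : IsTorsionPair C U₂ V₂) (Z : C) (hZ : IsZero Z) : Z ∈ U₂ ∩ V₁ :=
  ⟨t₂.addU.zero Z hZ, t₁.addV.zero Z hZ⟩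

end TorsionPairs

section TStructureToTorsionPair

variable {C : Type*} [Category C] [Preadditive C] [HasZeroObject C] [HasShift C ℤ]
  [∀ n : ℤ, (shiftFunctor C n).Additive] [Pretriangulated C] [HasBinaryBiproducts C]
  {U₁ V₁ U₂ V₂ L G : Set C}

lemma IsTStructure.shiftSet_subset_snd (hT : IsTStructure C L G) (t₁ : IsTorsionPair C U₁ V₁)
    (hU₁L : U₁ ⊆ L) : shiftSet C G (-1) ⊆ V₁ :=
  fun _ hA => t₁.mem_snd_of_hom_eq_zero fun _ hu f => hT.hom_zero _ (hU₁L hu) _ hA f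

lemma mem_starSet_inter_of_mem_inter (t₁ : IsTorsionPair C U₁ V₁) (t₂ : IsTorsionPair C U₂ V₂)
    (hT : IsTStructure C L G) (hU₁L : U₁ ⊆ L) (hLU₂ : L ⊆ U₂) {A : C} (hA : A ∈ U₂ ∩ V₁) :
    A ∈ starSet C (L ∩ V₁) (shiftSet C G (-1) ∩ U₂) := by
  obtain ⟨B, E, f₁, f₂, f₃, hB, hE, hd⟩ := hT.cover A trivial
  have hBV₁ : B ∈ V₁ := t₁.mem_snd_of_hom_eq_zero fun u hu φ => hom_to_obj₁_eq_zero hd φ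
    (t₁.hom_zero _ hu _ hA.2 _) (hT.hom_zero _ (hT.shift_mem (hU₁L hu)) _ hE)
  have hEU₂ : E ∈ U₂ := t₂.mem_fst_of_hom_eq_zero fun v hv φ => hom_from_obj₃_eq_zero hd φ
    (t₂.hom_zero _ hA.1 _ hv _) (t₂.hom_zero _ (hLU₂ (hT.shift_mem hB)) _ hv)
  exact mem_starSet_of_distTriang hd ⟨hB, hBV₁⟩ ⟨hE, hEU₂⟩

lemma isSTorsionPairIn_inter (t₁ : IsTorsionPair C U₁ V₁) (t₂ : IsTorsionPair C U₂ V₂)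
    (hT : IsTStructure C L G) (hU₁L : U₁ ⊆ L) (hLU₂ : L ⊆ U₂) :
    IsSTorsionPairIn C (U₂ ∩ V₁) (L ∩ V₁) (shiftSet C G (-1) ∩ U₂) := by
  have hG'V₁ := hT.shiftSet_subset_snd t₁ hU₁L
  refine ⟨⟨fun A hA => ⟨hLU₂ hA.1, hA.2⟩, fun A hA => ⟨hA.2, hG'V₁ hA.1⟩,
    fun A B e hA hB => ⟨hT.isoL e hA.1 trivial, hB.2⟩,
    fun A B e hA hB => ⟨shiftSet_isoClosed G (-1) e hA.1, hB.1⟩,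
    fun Z hZ hH => ⟨hT.mem_of_hom_eq_zero fun _ _ f => hZ.eq_of_src f 0, hH.2⟩,
    fun Z hZ hH => ⟨hT.mem_shiftSet_of_hom_eq_zero fun _ _ f => hZ.eq_of_tgt f 0, hH.1⟩,
    fun A hA B hB => ⟨hT.mem_of_hom_eq_zero fun P hP => hom_from_biprod_eq_zero
      (hT.hom_zero A hA.1 P hP) (hT.hom_zero B hB.1 P hP), t₁.addV.sum A hA.2 B hB.2⟩,
    fun A hA B hB => ⟨hT.mem_shiftSet_of_hom_eq_zero fun P hP => hom_to_biprod_eq_zero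
      (hT.hom_zero P hP A hA.1) (hT.hom_zero P hP B hB.1), t₂.addU.sum A hA.2 B hB.2⟩,
    fun A hA X i p hip hX => ⟨hT.mem_of_hom_eq_zero fun P hP =>
      hom_from_retract_eq_zero hip (hT.hom_zero A hA.1 P hP), hX.2⟩,
    fun A hA X i p hip hX => ⟨hT.mem_shiftSet_of_hom_eq_zero fun P hP =>
      hom_to_retract_eq_zero hip (hT.hom_zero P hP A hA.1), hX.1⟩,
    fun A hA B hB => hT.hom_zero A hA.1 B hB.1,
    fun A hA => mem_starSet_inter_of_mem_inter t₁ t₂ hT hU₁L hLU₂ hA⟩, ?_⟩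
  exact fun A hA B hB => hom_to_shift_neg_eq_zero (hT.hom_zero _ (hT.shift_mem hA.1) B hB.1)

lemma shiftSet_inter_subset (t₂ : IsTorsionPair C U₂ V₂) (hT : IsTStructure C L G)
    (hLU₂ : L ⊆ U₂) : shiftSet C (L ∩ V₁) 1 ⊆ U₂ :=
  fun _ ⟨_, hB, ⟨e⟩⟩ => t₂.addU.iso e.symm (hLU₂ (hT.shift_mem hB.1))

lemma shiftSet_neg_inter_subset (t₁ : IsTorsionPair C U₁ V₁) (hT : IsTStructure C L G)
    (hU₁L : U₁ ⊆ L) : shiftSet C (shiftSet C G (-1) ∩ U₂) (-1) ⊆ V₁ :=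
  fun _ ⟨_, hB, ⟨e⟩⟩ => t₁.addV.iso e.symm (hT.shiftSet_subset_snd t₁ hU₁L (hT.shift_neg_mem hB.1))

lemma starSet_inter_eq (t₁ : IsTorsionPair C U₁ V₁) (hT : IsTStructure C L G) (hU₁L : U₁ ⊆ L) :
    starSet C U₁ (L ∩ V₁) = L := by
  ext A
  constructor
  · exact fun hA => hT.mem_of_hom_eq_zero fun P hP => hom_from_mem_starSet_eq_zero
      (fun u hu => hT.hom_zero u (hU₁L hu) P hP) (fun B hB => hT.hom_zero B hB.1 P hP) A hA
  · intro hA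
    obtain ⟨u, v, f₁, f₂, f₃, hu, hv, hd⟩ := t₁.cover A
    have hvL : v ∈ L := hT.mem_of_hom_eq_zero fun P hP φ => hom_from_obj₃_eq_zero hd φ
      (hT.hom_zero A hA P hP _) (hT.hom_zero _ (hT.shift_mem (hU₁L hu)) P hP)
    exact mem_starSet_of_distTriang hd hu ⟨hvL, hv⟩

lemma shiftSet_eq_starSet_inter (t₂ : IsTorsionPair C U₂ V₂) (hT : IsTStructure C L G)
    (hLU₂ : L ⊆ U₂) : shiftSet C G (-1) = starSet C (shiftSet C G (-1) ∩ U₂) V₂ := by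
  ext A
  constructor
  · intro hA
    obtain ⟨u, v, f₁, f₂, f₃, hu, hv, hd⟩ := t₂.cover A
    have hu' : u ∈ shiftSet C G (-1) := hT.mem_shiftSet_of_hom_eq_zero fun P hP φ =>
      hom_to_obj₁_eq_zero hd φ (hT.hom_zero P hP A hA _)
        (t₂.hom_zero _ (hLU₂ (hT.shift_mem hP)) v hv)
    exact mem_starSet_of_distTriang hd ⟨hu', hu⟩ hv
  · exact fun hA => hT.mem_shiftSet_of_hom_eq_zero fun P hP => hom_to_mem_starSet_eq_zero
      (fun B hB => hT.hom_zero P hP B hB.1) (fun v hv => t₂.hom_zero P (hLU₂ hP) v hv) A hA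

lemma starSet_shiftSet_inter_eq (t₂ : IsTorsionPair C U₂ V₂) (hT : IsTStructure C L G)
    (hLU₂ : L ⊆ U₂) :
    starSet C (shiftSet C (shiftSet C G (-1) ∩ U₂) 1) (shiftSet C V₂ 1) = G := by
  rw [← shiftSet_starSet, ← shiftSet_eq_starSet_inter t₂ hT hLU₂, shiftSet_shiftSet,
    neg_add_cancel, shiftSet_zero fun _ _ e hA => hT.isoG e hA trivial]

end TStructureToTorsionPair

section TorsionPairToTStructure

-- `U₁ * T` is the aisle `D^{≤0}` of `ψ(T, F)`, and `F * V₂` is its `D^{≥1}`.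

variable {C : Type*} [Category C] [Preadditive C] [HasZeroObject C] [HasShift C ℤ]
  [∀ n : ℤ, (shiftFunctor C n).Additive] [Pretriangulated C] [HasBinaryBiproducts C]
  {U₁ V₁ U₂ V₂ T F : Set C}

lemma mem_aisle_of_hom_eq_zero (t₁ : IsTorsionPair C U₁ V₁) (t₂ : IsTorsionPair C U₂ V₂)
    (hU₁ : shiftSet C U₁ 1 ⊆ U₂) (hTF : IsTorsionPairIn C (U₂ ∩ V₁) T F)
    (hF : shiftSet C F (-1) ⊆ V₁) {A : C} (hAF : ∀ B ∈ F, ∀ f : A ⟶ B, f = 0)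
    (hAV : ∀ B ∈ V₂, ∀ f : A ⟶ B, f = 0) : A ∈ starSet C U₁ T := by
  obtain ⟨u, v, f₁, f₂, f₃, hu, hv, hd⟩ := t₁.cover A
  have hvU₂ : v ∈ U₂ := t₂.mem_fst_of_hom_eq_zero fun B hB φ => hom_from_obj₃_eq_zero hd φ
    (hAV B hB _) (t₂.hom_zero _ (hU₁ (mem_shiftSet_shift hu 1)) B hB)
  have hvT : v ∈ T := hTF.mem_fst_of_hom_eq_zero ⟨hvU₂, hv⟩ fun B hB φ =>
    hom_from_obj₃_eq_zero hd φ (hAF B hB _)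
      (hom_from_shift_eq_zero (t₁.hom_zero u hu _ (hF (mem_shiftSet_shift hB (-1)))))
  exact mem_starSet_of_distTriang hd hu hvT

lemma mem_coaisle_of_hom_eq_zero (t₁ : IsTorsionPair C U₁ V₁) (t₂ : IsTorsionPair C U₂ V₂)
    (hU₁ : shiftSet C U₁ 1 ⊆ U₂) (hTF : IsTorsionPairIn C (U₂ ∩ V₁) T F)
    (hT : shiftSet C T 1 ⊆ U₂) {A : C} (hUA : ∀ B ∈ U₁, ∀ f : B ⟶ A, f = 0)
    (hTA : ∀ B ∈ T, ∀ f : B ⟶ A, f = 0) : A ∈ starSet C F V₂ := by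
  obtain ⟨u, v, f₁, f₂, f₃, hu, hv, hd⟩ := t₂.cover A
  have huV₁ : u ∈ V₁ := t₁.mem_snd_of_hom_eq_zero fun B hB φ => hom_to_obj₁_eq_zero hd φ
    (hUA B hB _) (t₂.hom_zero _ (hU₁ (mem_shiftSet_shift hB 1)) v hv)
  have huF : u ∈ F := hTF.mem_snd_of_hom_eq_zero ⟨hu, huV₁⟩ fun B hB φ =>
    hom_to_obj₁_eq_zero hd φ (hTA B hB _) (t₂.hom_zero _ (hT (mem_shiftSet_shift hB 1)) v hv)
  exact mem_starSet_of_distTriang hd huF hv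

lemma hom_aisle_coaisle_eq_zero (t₁ : IsTorsionPair C U₁ V₁) (t₂ : IsTorsionPair C U₂ V₂)
    (hU₁ : U₁ ⊆ U₂) (hTF : IsTorsionPairIn C (U₂ ∩ V₁) T F) :
    homZero C (starSet C U₁ T) (starSet C F V₂) := fun A hA B hB =>
  hom_from_mem_starSet_eq_zero
    (fun X hX => hom_to_mem_starSet_eq_zero (fun Y hY => t₁.hom_zero X hX Y (hTF.subF hY).2)
      (t₂.hom_zero X (hU₁ hX)) B hB)
    (fun X hX => hom_to_mem_starSet_eq_zero (hTF.hom_zero X hX)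
      (t₂.hom_zero X (hTF.subT hX).1) B hB) A hA

lemma hom_aisle_shift_coaisle_eq_zero (t₁ : IsTorsionPair C U₁ V₁) (t₂ : IsTorsionPair C U₂ V₂)
    (hU₁ : shiftSet C U₁ 1 ⊆ U₂) (hTF : IsSTorsionPairIn C (U₂ ∩ V₁) T F)
    (hT : shiftSet C T 1 ⊆ U₂) (hF : shiftSet C F (-1) ⊆ V₁) :
    ∀ A ∈ starSet C U₁ T, ∀ B ∈ starSet C F V₂, ∀ f : A ⟶ B⟦(-1 : ℤ)⟧, f = 0 := by
  intro A hA B hB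
  refine hom_from_mem_starSet_eq_zero (fun X hX => ?_) (fun X hX => ?_) A hA <;>
    refine hom_to_shift_neg_eq_zero
      (hom_to_mem_starSet_eq_zero (fun Y hY => ?_) (fun Y hY => ?_) B hB)
  · exact hom_from_shift_eq_zero (t₁.hom_zero X hX _ (hF (mem_shiftSet_shift hY (-1))))
  · exact t₂.hom_zero _ (hU₁ (mem_shiftSet_shift hX 1)) Y hY
  · exact hom_from_shift_eq_zero (hTF.neg_hom_zero X hX Y hY)
  · exact t₂.hom_zero _ (hT (mem_shiftSet_shift hX 1)) Y hY

/-- Split `A` by `t₂` as `u₂ → A → v₂`, then `u₂` by `t₁` as `u₁ → u₂ → h`, and `h ∈ U₂ ∩ V₁` by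
`(T, F)` as `t → h → f₀`. Pulling `h → u₁⟦1⟧` back along `t → h` gives `l ∈ U₁ * T` with a map
`l → A`. For `X` orthogonal to `F` and `V₂`, `Hom(X, l → A)` is onto and `Hom(X, (l → A)⟦1⟧)` is
injective, so the cone of `l → A` is right orthogonal to `U₁` and `T`, hence lies in `F * V₂`. -/
lemma mem_starSet_aisle_coaisle (t₁ : IsTorsionPair C U₁ V₁) (t₂ : IsTorsionPair C U₂ V₂)
    (h12 : torsLE C U₁ U₂) (hTF : IsTorsionPairIn C (U₂ ∩ V₁) T F) (hT : shiftSet C T 1 ⊆ U₂)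
    (A : C) : A ∈ starSet C (starSet C U₁ T) (starSet C F V₂) := by
  obtain ⟨u₂, v₂, a, b, c, hu₂, hv₂, hA⟩ := t₂.cover A
  obtain ⟨u₁, h, d, e, f, hu₁, hh, hu⟩ := t₁.cover u₂
  have hhU₂ : h ∈ U₂ := t₂.mem_fst_of_hom_eq_zero fun v hv φ => hom_from_obj₃_eq_zero hu φ
    (t₂.hom_zero _ hu₂ _ hv _) (t₂.hom_zero _ (h12.2 (mem_shiftSet_shift hu₁ 1)) _ hv)
  obtain ⟨t, f₀, p, q, r, ht, hf₀, hh'⟩ := hTF.cover h ⟨hhU₂, hh⟩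
  obtain ⟨l, j, k, hl⟩ := distinguished_cocone_triangle₂ (p ≫ f)
  have hcomm : (p ≫ f) ≫ (𝟙 u₁)⟦(1 : ℤ)⟧' = p ≫ f := by simp
  obtain ⟨ν, hν₁, hν₂⟩ : ∃ ν : l ⟶ u₂, j ≫ ν = 𝟙 u₁ ≫ d ∧ k ≫ p = ν ≫ e :=
    complete_distinguished_triangle_morphism₂ _ _ hl hu (𝟙 u₁) p hcomm
  let φ : Triangle.mk j k (p ≫ f) ⟶ Triangle.mk d e f := Triangle.homMk _ _ (𝟙 u₁) ν p hν₁ hν₂ hcomm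
  have : IsIso φ.hom₁ := inferInstanceAs (IsIso (𝟙 u₁))
  obtain ⟨g, ε, δ, hg⟩ := distinguished_cocone_triangle (ν ≫ a)
  have hg0 : ∀ X : C, (∀ B ∈ F, ∀ ψ : X ⟶ B, ψ = 0) → (∀ B ∈ V₂, ∀ ψ : X ⟶ B, ψ = 0) →
      ∀ ψ : X ⟶ g, ψ = 0 := by
    intro X hXF hXV
    have hp := comp_mor₁_surjective hh' (hXF f₀ hf₀)
    have hp' := eq_zero_of_comp_shift_mor₁_eq_zero hh' (hXF f₀ hf₀)
    have ha : Function.Surjective fun ψ : X ⟶ u₂ => ψ ≫ a := comp_mor₁_surjective hA (hXV v₂ hv₂)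
    have ha' := eq_zero_of_comp_shift_mor₁_eq_zero hA (hXV v₂ hv₂)
    have hν : Function.Surjective fun ψ : X ⟶ l => ψ ≫ ν := comp_hom₂_surjective hl hu φ hp
    refine hom_to_obj₃_eq_zero hg ?_ ?_
    · change Function.Surjective fun ψ : X ⟶ l => ψ ≫ ν ≫ a
      simpa only [Function.comp_def, assoc] using ha.comp hν
    · intro (ρ : X ⟶ l⟦(1 : ℤ)⟧) (hρ : ρ ≫ (ν ≫ a)⟦(1 : ℤ)⟧' = 0)
      rw [Functor.map_comp, ← assoc] at hρ
      exact eq_zero_of_comp_shift_hom₂_eq_zero hl hu φ hp hp' ρ (ha' _ hρ)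
  refine mem_starSet_of_distTriang hg (mem_starSet_of_distTriang hl hu₁ ht)
    (mem_coaisle_of_hom_eq_zero t₁ t₂ h12.2 hTF hT (fun X hX => hg0 X ?_ ?_)
      fun X hX => hg0 X ?_ ?_)
  · exact fun B hB => t₁.hom_zero X hX B (hTF.subF hB).2
  · exact t₂.hom_zero X (h12.1 hX)
  · exact hTF.hom_zero X hX
  · exact t₂.hom_zero X (hTF.subT hX).1

lemma shift_mem_aisle (t₁ : IsTorsionPair C U₁ V₁) (t₂ : IsTorsionPair C U₂ V₂)
    (hU₁ : shiftSet C U₁ 1 ⊆ U₂) (hTF : IsSTorsionPairIn C (U₂ ∩ V₁) T F)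
    (hT : shiftSet C T 1 ⊆ U₂) (hF : shiftSet C F (-1) ⊆ V₁) {A : C}
    (hA : A ∈ starSet C U₁ T) : A⟦(1 : ℤ)⟧ ∈ starSet C U₁ T :=
  have hom := hom_aisle_shift_coaisle_eq_zero t₁ t₂ hU₁ hTF hT hF A hA
  mem_aisle_of_hom_eq_zero t₁ t₂ hU₁ hTF.toIsTorsionPairIn hF
    (fun B hB => hom_from_shift_eq_zero (hom B (mem_starSet_left t₂.addV.zero hB)))
    (fun B hB => hom_from_shift_eq_zero (hom B (mem_starSet_right
      (fun Z hZ => hTF.zeroF Z hZ (zero_mem_inter t₁ t₂ Z hZ)) hB)))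

lemma shift_neg_mem_coaisle (t₁ : IsTorsionPair C U₁ V₁) (t₂ : IsTorsionPair C U₂ V₂)
    (hU₁ : shiftSet C U₁ 1 ⊆ U₂) (hTF : IsSTorsionPairIn C (U₂ ∩ V₁) T F)
    (hT : shiftSet C T 1 ⊆ U₂) (hF : shiftSet C F (-1) ⊆ V₁) {A : C}
    (hA : A ∈ starSet C F V₂) : A⟦(-1 : ℤ)⟧ ∈ starSet C F V₂ :=
  have hom := fun B hB => hom_aisle_shift_coaisle_eq_zero t₁ t₂ hU₁ hTF hT hF B hB A hA
  mem_coaisle_of_hom_eq_zero t₁ t₂ hU₁ hTF.toIsTorsionPairIn hT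
    (fun B hB => hom B (mem_starSet_left
      (fun Z hZ => hTF.zeroT Z hZ (zero_mem_inter t₁ t₂ Z hZ)) hB))
    (fun B hB => hom B (mem_starSet_right t₁.addU.zero hB))

lemma aisle_inter_eq (t₁ : IsTorsionPair C U₁ V₁) (t₂ : IsTorsionPair C U₂ V₂)
    (hU₁ : U₁ ⊆ U₂) (hTF : IsTorsionPairIn C (U₂ ∩ V₁) T F) : starSet C U₁ T ∩ V₁ = T := by
  ext A
  constructor
  · rintro ⟨hA, hAV₁⟩
    have hAU₂ := t₂.starSet_subset_fst hU₁ (fun _ h => (hTF.subT h).1) hA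
    exact hTF.mem_fst_of_hom_eq_zero ⟨hAU₂, hAV₁⟩ fun B hB => hom_aisle_coaisle_eq_zero t₁ t₂ hU₁
      hTF A hA B (mem_starSet_left t₂.addV.zero hB)
  · exact fun hA => ⟨mem_starSet_right t₁.addU.zero hA, (hTF.subT hA).2⟩

lemma coaisle_inter_eq (t₁ : IsTorsionPair C U₁ V₁) (t₂ : IsTorsionPair C U₂ V₂)
    (hTF : IsTorsionPairIn C (U₂ ∩ V₁) T F) : starSet C F V₂ ∩ U₂ = F := by
  ext A
  constructor
  · rintro ⟨⟨B, E, f₁, f₂, f₃, hB, hE, hd⟩, hAU₂⟩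
    have : IsSplitEpi f₁ := isSplitEpi_mor₁_of_mor₂_eq_zero hd (t₂.hom_zero A hAU₂ E hE f₂)
    have hAV₁ := t₁.addV.summand B (hTF.subF hB).2 A (section_ f₁) f₁ (IsSplitEpi.id f₁)
    exact hTF.summandF B hB A (section_ f₁) f₁ (IsSplitEpi.id f₁) ⟨hAU₂, hAV₁⟩
  · exact fun hA => ⟨mem_starSet_left t₂.addV.zero hA, (hTF.subF hA).1⟩

lemma isTStructure_aisle (t₁ : IsTorsionPair C U₁ V₁) (t₂ : IsTorsionPair C U₂ V₂)
    (h12 : torsLE C U₁ U₂) (hTF : IsSTorsionPairIn C (U₂ ∩ V₁) T F)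
    (hT : shiftSet C T 1 ⊆ U₂) (hF : shiftSet C F (-1) ⊆ V₁) :
    IsTStructure C (starSet C U₁ T) (starSet C (shiftSet C F 1) (shiftSet C V₂ 1)) := by
  refine ⟨Set.subset_univ _, Set.subset_univ _, fun _ _ e hA _ => starSet_isoClosed _ _ e hA,
    fun _ _ e hA _ => starSet_isoClosed _ _ e hA, ?_, ?_,
    fun A hA => ⟨_, shift_mem_aisle t₁ t₂ h12.2 hTF hT hF hA, ⟨(shiftShiftNeg A (1 : ℤ)).symm⟩⟩,
    ?_⟩ <;> rw [shiftSet_neg_starSet_shiftSet]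
  · exact hom_aisle_coaisle_eq_zero t₁ t₂ h12.1 hTF.toIsTorsionPairIn
  · exact fun A _ => mem_starSet_aisle_coaisle t₁ t₂ h12 hTF.toIsTorsionPairIn hT A
  · intro A hA
    rw [← shiftSet_starSet]
    exact ⟨_, shift_neg_mem_coaisle t₁ t₂ h12.2 hTF hT hF hA, ⟨(shiftNegShift A (1 : ℤ)).symm⟩⟩

end TorsionPairToTStructure

/-- Corollary 3.10 (2): `φ(D^{≤0}, D^{≥0}) = (D^{≤0} ∩ 𝒱₁, D^{≥1} ∩ 𝒰₂)`
and `ψ(𝒯,ℱ) = (𝒰₁ * 𝒯, ℱ[1] * 𝒱₂[1])` are mutually inverse, order preserving bijections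
between `t`-structures on `D` with `𝒰₁ ⊆ D^{≤0} ⊆ 𝒰₂` and `s`-torsion pairs `(𝒯,ℱ)` in
`ℋ = 𝒰₂ ∩ 𝒱₁` with `𝒯[1] ⊆ 𝒰₂` and `ℱ[-1] ⊆ 𝒱₁`. -/
theorem stmt4 (U₁ V₁ U₂ V₂ : Set D)
    (t₁ : IsTorsionPair D U₁ V₁) (t₂ : IsTorsionPair D U₂ V₂)
    (h12 : torsLE D U₁ U₂) :
    -- φ is well defined and ψ ∘ φ = id
    (∀ L G, IsTStructure D L G → U₁ ⊆ L → L ⊆ U₂ →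
       IsSTorsionPairIn D (U₂ ∩ V₁) (L ∩ V₁) (shiftSet D G (-1) ∩ U₂) ∧
       shiftSet D (L ∩ V₁) 1 ⊆ U₂ ∧ shiftSet D (shiftSet D G (-1) ∩ U₂) (-1) ⊆ V₁ ∧
       starSet D U₁ (L ∩ V₁) = L ∧
       starSet D (shiftSet D (shiftSet D G (-1) ∩ U₂) 1) (shiftSet D V₂ 1) = G) ∧
    -- ψ is well defined and φ ∘ ψ = id
    (∀ T F, IsSTorsionPairIn D (U₂ ∩ V₁) T F →
       shiftSet D T 1 ⊆ U₂ → shiftSet D F (-1) ⊆ V₁ →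
       IsTStructure D (starSet D U₁ T) (starSet D (shiftSet D F 1) (shiftSet D V₂ 1)) ∧
       U₁ ⊆ starSet D U₁ T ∧ starSet D U₁ T ⊆ U₂ ∧
       starSet D U₁ T ∩ V₁ = T ∧
       shiftSet D (starSet D (shiftSet D F 1) (shiftSet D V₂ 1)) (-1) ∩ U₂ = F) ∧
    -- φ preserves the orders (inclusion of aisles to inclusion of torsion classes)
    (∀ L G L' G', IsTStructure D L G → IsTStructure D L' G' →
       U₁ ⊆ L → L ⊆ U₂ → U₁ ⊆ L' → L' ⊆ U₂ → L ⊆ L' → L ∩ V₁ ⊆ L' ∩ V₁) ∧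
    -- ψ preserves the orders
    (∀ T F T' F', IsSTorsionPairIn D (U₂ ∩ V₁) T F → IsSTorsionPairIn D (U₂ ∩ V₁) T' F' →
       shiftSet D T 1 ⊆ U₂ → shiftSet D F (-1) ⊆ V₁ →
       shiftSet D T' 1 ⊆ U₂ → shiftSet D F' (-1) ⊆ V₁ →
       T ⊆ T' → starSet D U₁ T ⊆ starSet D U₁ T') := by
  refine ⟨fun L G hT hU₁L hLU₂ => ⟨isSTorsionPairIn_inter t₁ t₂ hT hU₁L hLU₂,
      shiftSet_inter_subset t₂ hT hLU₂, shiftSet_neg_inter_subset t₁ hT hU₁L,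
      starSet_inter_eq t₁ hT hU₁L, starSet_shiftSet_inter_eq t₂ hT hLU₂⟩,
    fun T F hTF hT hF => ⟨isTStructure_aisle t₁ t₂ h12 hTF hT hF,
      fun _ hu => mem_starSet_left (fun Z hZ => hTF.zeroT Z hZ (zero_mem_inter t₁ t₂ Z hZ)) hu,
      t₂.starSet_subset_fst h12.1 fun _ h => (hTF.subT h).1,
      aisle_inter_eq t₁ t₂ h12.1 hTF.toIsTorsionPairIn, ?_⟩,
    fun _ _ _ _ _ _ _ _ _ _ hLL' => Set.inter_subset_inter_left V₁ hLL',
    fun _ _ _ _ _ _ _ _ _ _ hTT' => starSet_mono subset_rfl hTT'⟩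
  rw [shiftSet_neg_starSet_shiftSet]
  exact coaisle_inter_eq t₁ t₂ hTF.toIsTorsionPairIn
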